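/- Let k be even, n a multiple of k, and f a homogeneous skew-symmetric polynomial in k variables of degree strictly less than (k/2)(n-1). Then the hyperpfaffian Pf(f(x_S))_{S ∈ binom([n],k)} of order n is the zero polynomial. -/

import Mathlib

/-!
Summing the terms `sign σ • ∏ᵢ f(x_{σ(block i)})` over *all* permutations `σ` of `[m*k]` gives
`|B| • Pf`, where `B` is the group of permutations mapping blocks to blocks: the partition
representatives form a transversal of `B`, and since `k` is even the sign of an element of `B` is
the product of its in-block signs, which skew-symmetry of `f` absorbs. The full sum is
alternating and homogeneous of degree `m*d < n(n-1)/2`, `n = m*k`, while a nonzero coefficient of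
an alternating polynomial sits at an exponent with pairwise distinct entries, hence of degree at
least `0 + 1 + ⋯ + (n-1)`. So the full sum vanishes, and in characteristic zero so does `Pf`.
-/

open Finset Equiv MvPolynomial

open scoped Classical

noncomputable section

/-- The position of the `j`-th element of the `i`-th block. -/
def bpos (m k : ℕ) (i : Fin m) (j : Fin k) : Fin (m * k) :=
  ⟨k * (i : ℕ) + (j : ℕ), by
    have hi := i.isLt
    have hj := j.isLt
    calc k * (i : ℕ) + (j : ℕ) < k * (i : ℕ) + k := by omega
      _ = k * ((i : ℕ) + 1) := by ring
      _ ≤ k * m := Nat.mul_le_mul_left k hi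
      _ = m * k := Nat.mul_comm k m⟩

/-- Each block of the (oriented) partition is listed in increasing order. -/
def IsBlockMono (m k : ℕ) (π : Equiv.Perm (Fin (m * k))) : Prop :=
  ∀ i : Fin m, StrictMono fun j : Fin k => π (bpos m k i j)

/-- The blocks are listed in increasing order of their first elements. -/
def IsLeadMono (m k : ℕ) (π : Equiv.Perm (Fin (m * k))) : Prop :=
  ∀ (i i' : Fin m) (j : Fin k), i < i' →
    π (bpos m k i ⟨0, j.pos⟩) < π (bpos m k i' ⟨0, j.pos⟩)

/-- Canonical representative of a set partition of `[n]`, `n = m*k`, into `m` blocks of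
size `k`: each block increasing and blocks ordered by their minima. -/
def IsPartRep (m k : ℕ) (π : Equiv.Perm (Fin (m * k))) : Prop :=
  IsBlockMono m k π ∧ IsLeadMono m k π

/-- A `k`-ary function is skew-symmetric. -/
def IsSkewFun {k : ℕ} {α R : Type*} [CommRing R] (f : (Fin k → α) → R) : Prop :=
  ∀ (σ : Equiv.Perm (Fin k)) (v : Fin k → α),
    f (v ∘ σ) = (Equiv.Perm.sign σ : ℤ) • f v

/-- The hyperpfaffian of a skew-symmetric `k`-ary function on `[m*k]`:
the signed sum over all set partitions of `[m*k]` into `m` blocks of size `k`. -/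
def hyperPf (m k : ℕ) {R : Type*} [CommRing R]
    (f : (Fin k → Fin (m * k)) → R) : R :=
  ∑ π ∈ Finset.univ.filter (IsPartRep m k),
    (Equiv.Perm.sign π : ℤ) • ∏ i : Fin m, f fun j => π (bpos m k i j)

/-- A polynomial in `k` variables is skew-symmetric. -/
def IsSkewPoly {k : ℕ} {R : Type*} [CommRing R] (f : MvPolynomial (Fin k) R) : Prop :=
  ∀ σ : Equiv.Perm (Fin k),
    MvPolynomial.rename (⇑σ) f = (Equiv.Perm.sign σ : ℤ) • f

/-- The hyperpfaffian `Pf (f(x_S))` of the values of a polynomial `f` in `k` variables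
at the variables indexed by the `k`-subsets `S` of `[m*k]`. -/
def hyperPfPoly (m k : ℕ) {R : Type*} [CommRing R]
    (f : MvPolynomial (Fin k) R) : MvPolynomial (Fin (m * k)) R :=
  ∑ π ∈ Finset.univ.filter (IsPartRep m k),
    (Equiv.Perm.sign π : ℤ) •
      ∏ i : Fin m, MvPolynomial.rename (fun j => π (bpos m k i j)) f

/-- The Vandermonde product. -/
def vand (n : ℕ) (R : Type*) [CommRing R] : MvPolynomial (Fin n) R :=
  ∏ p ∈ Finset.univ.filter (fun p : Fin n × Fin n => p.1 < p.2),
    (MvPolynomial.X p.2 - MvPolynomial.X p.1)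

/-- The coefficient of `f` at the monomial with exponent vector `r`. -/
def coeffOf {k : ℕ} {R : Type*} [CommRing R] (f : MvPolynomial (Fin k) R)
    (r : Fin k → ℕ) : R :=
  MvPolynomial.coeff (Finsupp.equivFunOnFinite.symm r) f

/-- Membership in `Γ_{n,k}`: a strictly increasing composition of `k/2*(n-1)`
into `k` distinct nonnegative parts. -/
def InGamma (n k : ℕ) (r : Fin k → ℕ) : Prop :=
  StrictMono r ∧ ∑ j, r j = k / 2 * (n - 1)

/-- Canonical representative of an element `β` of `R_{n,k}`, encoded as a permutation `e` of
`Fin (m*k)` (identified with `{0,…,n-1}`): the blocks of `e` are the compositions of `β`,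
each block is increasing and sums to `k/2*(n-1)`, and the blocks are ordered canonically. -/
def IsWeightRep (m k : ℕ) (e : Equiv.Perm (Fin (m * k))) : Prop :=
  IsPartRep m k e ∧
    ∀ i : Fin m, ∑ j : Fin k, ((e (bpos m k i j)) : ℕ) = k / 2 * (m * k - 1)

/-- The weight of the element `x` of `[m*k]` in the weighted oriented partition with
oriented partition (representative) `π` and weight vectors `w`. -/
def wtOf (m k : ℕ) (π : Equiv.Perm (Fin (m * k))) (w : Fin m → Fin k → ℕ) :
    Fin (m * k) → ℕ := fun x =>
  w ⟨((π.symm x : Fin (m*k)) : ℕ) / k, Nat.div_lt_of_lt_mul (lt_of_lt_of_le (π.symm x).isLt (le_of_eq (Nat.mul_comm m k)))⟩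
    ⟨((π.symm x : Fin (m*k)) : ℕ) % k, Nat.mod_lt _ (by
      have ht := (π.symm x).isLt
      have hk : k ≠ 0 := by rintro rfl; omega
      omega)⟩

end

open Equiv.Perm (sign)

section BlockPerms

variable {m k : ℕ}

lemma bpos_eq_finProdFinEquiv (i : Fin m) (j : Fin k) :
    bpos m k i j = finProdFinEquiv (i, j) := by
  ext
  simp [bpos, Nat.add_comm]

lemma bpos_inj {i i' : Fin m} {j j' : Fin k} :
    bpos m k i j = bpos m k i' j' ↔ i = i' ∧ j = j' := by
  simp [bpos_eq_finProdFinEquiv]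

lemma perm_ext_bpos {ρ ρ' : Perm (Fin (m * k))}
    (h : ∀ i j, ρ (bpos m k i j) = ρ' (bpos m k i j)) : ρ = ρ' := by
  ext1 x
  obtain ⟨⟨i, j⟩, rfl⟩ := finProdFinEquiv.surjective x
  rw [← bpos_eq_finProdFinEquiv, h]

def blockPerm (η : Perm (Fin m)) (σs : Fin m → Perm (Fin k)) : Perm (Fin (m * k)) :=
  finProdFinEquiv.permCongr (prodCongrLeft (fun _ => η) * prodCongrRight σs)

@[simp]
lemma blockPerm_bpos (η : Perm (Fin m)) (σs : Fin m → Perm (Fin k)) (i : Fin m) (j : Fin k) :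
    blockPerm η σs (bpos m k i j) = bpos m k (η i) (σs i j) := by
  simp [blockPerm, bpos_eq_finProdFinEquiv, Equiv.permCongr_apply]

lemma blockPerm_one : blockPerm (1 : Perm (Fin m)) (1 : Fin m → Perm (Fin k)) = 1 :=
  perm_ext_bpos fun i j => by simp

lemma blockPerm_mul (η η' : Perm (Fin m)) (σs σs' : Fin m → Perm (Fin k)) :
    blockPerm η σs * blockPerm η' σs' = blockPerm (η * η') (fun i => σs (η' i) * σs' i) :=
  perm_ext_bpos fun i j => by simp [Perm.mul_apply]

lemma sign_blockPerm (hk : Even k) (η : Perm (Fin m)) (σs : Fin m → Perm (Fin k)) :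
    sign (blockPerm η σs) = ∏ i, sign (σs i) := by
  obtain ⟨c, rfl⟩ := hk
  simp [blockPerm, Perm.sign_permCongr, Perm.sign_prodCongrLeft, Perm.sign_prodCongrRight,
    ← two_mul, pow_mul]

def blockPerms (m k : ℕ) : Subgroup (Perm (Fin (m * k))) where
  carrier := {ρ | ∃ η σs, blockPerm η σs = ρ}
  one_mem' := ⟨1, 1, blockPerm_one⟩
  mul_mem' := by
    rintro _ _ ⟨η, σs, rfl⟩ ⟨η', σs', rfl⟩
    exact ⟨_, _, (blockPerm_mul η η' σs σs').symm⟩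
  inv_mem' := by
    rintro _ ⟨η, σs, rfl⟩
    refine ⟨η⁻¹, fun i => (σs (η⁻¹ i))⁻¹, (inv_eq_of_mul_eq_one_left ?_).symm⟩
    rw [blockPerm_mul, ← blockPerm_one]
    congr 1 <;> ext <;> simp

end BlockPerms

section Terms

variable {m k : ℕ} {R : Type*} [CommRing R]

noncomputable def pfTerm (m k : ℕ) (f : MvPolynomial (Fin k) R) (σ : Perm (Fin (m * k))) :
    MvPolynomial (Fin (m * k)) R :=
  (sign σ : ℤ) • ∏ i : Fin m, rename (fun j => σ (bpos m k i j)) f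

lemma hyperPfPoly_eq_sum_pfTerm (f : MvPolynomial (Fin k) R) :
    hyperPfPoly m k f = ∑ π ∈ univ.filter (IsPartRep m k), pfTerm m k f π :=
  rfl

lemma rename_pfTerm (f : MvPolynomial (Fin k) R) (τ σ : Perm (Fin (m * k))) :
    rename τ (pfTerm m k f σ) = (sign τ : ℤ) • pfTerm m k f (τ * σ) := by
  have hsign : (sign τ : ℤ) * sign (τ * σ) = sign σ := by
    rw [Perm.sign_mul, Units.val_mul, ← mul_assoc, ← Units.val_mul, Int.units_mul_self,
      Units.val_one, one_mul]
  simp only [pfTerm, map_zsmul, map_prod, rename_rename, smul_smul, hsign]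
  rfl

lemma pfTerm_mul_blockPerm (hk : Even k) {f : MvPolynomial (Fin k) R} (hskew : IsSkewPoly f)
    (σ : Perm (Fin (m * k))) (η : Perm (Fin m)) (σs : Fin m → Perm (Fin k)) :
    pfTerm m k f (σ * blockPerm η σs) = pfTerm m k f σ := by
  have hblock : ∀ i, rename (fun j => (σ * blockPerm η σs) (bpos m k i j)) f =
      (sign (σs i) : ℤ) • rename (fun j => σ (bpos m k (η i) j)) f := by
    intro i
    have hcomp : (fun j => (σ * blockPerm η σs) (bpos m k i j)) =
        (fun j => σ (bpos m k (η i) j)) ∘ σs i := by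
      funext j
      simp [Perm.mul_apply]
    rw [hcomp, ← rename_rename, hskew, map_zsmul]
  have hsign : (sign (σ * blockPerm η σs) : ℤ) * ∏ i, (sign (σs i) : ℤ) = sign σ := by
    rw [Perm.sign_mul, sign_blockPerm hk, ← Units.coe_prod, ← Units.val_mul, mul_assoc,
      Int.units_mul_self, mul_one]
  simp only [pfTerm, hblock, zsmul_eq_mul, prod_mul_distrib]
  rw [Equiv.prod_comp η (fun i => rename (fun j => σ (bpos m k i j)) f), ← mul_assoc]
  push_cast [← hsign]
  rfl

lemma pfTerm_mul_of_mem_blockPerms (hk : Even k) {f : MvPolynomial (Fin k) R}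
    (hskew : IsSkewPoly f) (σ : Perm (Fin (m * k))) {ρ : Perm (Fin (m * k))}
    (hρ : ρ ∈ blockPerms m k) : pfTerm m k f (σ * ρ) = pfTerm m k f σ := by
  obtain ⟨η, σs, rfl⟩ := hρ
  exact pfTerm_mul_blockPerm hk hskew σ η σs

lemma pfTerm_isHomogeneous {d : ℕ} {f : MvPolynomial (Fin k) R} (hf : f.IsHomogeneous d)
    (σ : Perm (Fin (m * k))) : (pfTerm m k f σ).IsHomogeneous (m * d) := by
  have hprod := IsHomogeneous.prod univ (fun i : Fin m => rename (fun j => σ (bpos m k i j)) f)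
    (fun _ => d) (fun _ _ => hf.rename_isHomogeneous)
  simp only [sum_const, card_univ, Fintype.card_fin, smul_eq_mul] at hprod
  rw [pfTerm, zsmul_eq_mul, ← map_intCast (C : R →+* MvPolynomial (Fin (m * k)) R)]
  exact hprod.C_mul _

end Terms

section Representatives

variable {m k : ℕ}

lemma Equiv.Perm.eq_one_of_strictMono_comp {n : ℕ} {α : Type*} [LinearOrder α] {g : Fin n → α}
    {τ : Perm (Fin n)} (hg : StrictMono g) (hgτ : StrictMono (g ∘ τ)) : τ = 1 :=
  have hτ : StrictMono τ := fun _ _ h => hg.lt_iff_lt.mp (hgτ h)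
  Equiv.ext fun _ => hτ.apply_eq

lemma exists_isPartRep_mul_blockPerm (hk : 0 < k) (σ : Perm (Fin (m * k))) :
    ∃ η σs, IsPartRep m k (σ * blockPerm η σs) := by
  have hσ : ∀ {i i' j j'}, σ (bpos m k i j) = σ (bpos m k i' j') → i = i' ∧ j = j' :=
    fun h => bpos_inj.mp (σ.injective h)
  let sortBlock (i : Fin m) : Perm (Fin k) := Tuple.sort fun j => σ (bpos m k i j)
  let lead (i : Fin m) : Fin (m * k) := σ (bpos m k i (sortBlock i ⟨0, hk⟩))
  have hlead : StrictMono (lead ∘ Tuple.sort lead) :=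
    (Tuple.monotone_sort lead).strictMono_of_injective fun i i' h =>
      (Tuple.sort lead).injective (hσ h).1
  refine ⟨Tuple.sort lead, fun i => sortBlock (Tuple.sort lead i), fun i => ?_,
    fun i i' _ hii' => by simpa [Perm.mul_apply] using hlead hii'⟩
  have hblock := (Tuple.monotone_sort fun j => σ (bpos m k (Tuple.sort lead i) j))
    |>.strictMono_of_injective fun j j' h => (sortBlock _).injective (hσ h).2
  simpa [Function.comp_def, Perm.mul_apply] using hblock

lemma eq_one_of_isPartRep_mul (hk : 0 < k) {π ρ : Perm (Fin (m * k))} (hπ : IsPartRep m k π)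
    (hπρ : IsPartRep m k (π * ρ)) (hρ : ρ ∈ blockPerms m k) : ρ = 1 := by
  obtain ⟨η, σs, rfl⟩ := hρ
  obtain rfl : σs = 1 := funext fun i => Perm.eq_one_of_strictMono_comp (hπ.1 (η i))
    (by simpa [Function.comp_def, Perm.mul_apply] using hπρ.1 i)
  obtain rfl : η = 1 := Perm.eq_one_of_strictMono_comp (g := fun i => π (bpos m k i ⟨0, hk⟩))
    (fun i i' h => hπ.2 i i' ⟨0, hk⟩ h)
    (fun i i' h => by simpa [Perm.mul_apply] using hπρ.2 i i' ⟨0, hk⟩ h)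
  exact blockPerm_one

lemma isComplement_isPartRep_blockPerms (hk : 0 < k) :
    Subgroup.IsComplement {π | IsPartRep m k π} (blockPerms m k : Set (Perm (Fin (m * k)))) := by
  refine ⟨?_, fun σ => ?_⟩
  · rintro ⟨⟨π₁, hπ₁⟩, ⟨ρ₁, hρ₁⟩⟩ ⟨⟨π₂, hπ₂⟩, ⟨ρ₂, hρ₂⟩⟩ h
    change π₁ * ρ₁ = π₂ * ρ₂ at h
    have hρ : ρ₁ * ρ₂⁻¹ = 1 := eq_one_of_isPartRep_mul hk hπ₁
      (by rwa [← mul_assoc, h, mul_inv_cancel_right]) (mul_mem hρ₁ (inv_mem hρ₂))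
    obtain rfl := mul_inv_eq_one.mp hρ
    obtain rfl := mul_right_cancel h
    rfl
  · obtain ⟨η, σs, hrep⟩ := exists_isPartRep_mul_blockPerm hk σ
    exact ⟨⟨⟨_, hrep⟩, ⟨(blockPerm η σs)⁻¹, inv_mem ⟨η, σs, rfl⟩⟩⟩, mul_inv_cancel_right σ _⟩

end Representatives

section Symmetrization

variable {m k : ℕ} {R : Type*} [CommRing R]

lemma sum_pfTerm_eq_card_smul_hyperPfPoly (hk : Even k) (hk₀ : 0 < k)
    {f : MvPolynomial (Fin k) R} (hskew : IsSkewPoly f) :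
    ∑ σ, pfTerm m k f σ = Nat.card (blockPerms m k) • hyperPfPoly m k f := by
  rw [hyperPfPoly_eq_sum_pfTerm, smul_sum, ← Set.toFinset_ofPred, ← Finset.sum_set_coe,
    ← (Equiv.ofBijective _ (isComplement_isPartRep_blockPerms hk₀)).sum_comp,
    Fintype.sum_prod_type]
  refine Fintype.sum_congr _ _ fun π => ?_
  simp [pfTerm_mul_of_mem_blockPerms hk hskew _ (SetLike.coe_mem _)]

lemma rename_swap_sum_pfTerm (f : MvPolynomial (Fin k) R) {a b : Fin (m * k)} (hab : a ≠ b) :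
    rename (swap a b) (∑ σ, pfTerm m k f σ) = -∑ σ, pfTerm m k f σ := by
  simp only [map_sum, rename_pfTerm, ← smul_sum, Perm.sign_swap hab]
  rw [Fintype.sum_equiv (Equiv.mulLeft (swap a b)) (fun σ => pfTerm m k f (swap a b * σ))
    (pfTerm m k f) fun _ => rfl, Units.val_neg, Units.val_one, neg_one_zsmul]

end Symmetrization

section Alternating

lemma Finset.sum_range_card_le_sum (s : Finset ℕ) : ∑ i ∈ range #s, i ≤ ∑ i ∈ s, i := by
  induction s using Finset.induction_on_max with
  | empty => simp
  | insert a s ha ih =>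
    have hcard : #s ≤ a := by
      simpa using card_le_card (fun x hx => mem_range.mpr (ha x hx) : s ⊆ range a)
    have ha' : a ∉ s := fun h => (ha a h).false
    rw [card_insert_of_notMem ha', sum_range_succ, sum_insert ha']
    omega

variable {ι R : Type*} [CommRing R] [IsAddTorsionFree R] [DecidableEq ι]

lemma MvPolynomial.coeff_eq_zero_of_rename_swap_eq_neg {P : MvPolynomial ι R} {a b : ι}
    (hP : rename (swap a b) P = -P) {u : ι →₀ ℕ} (hu : u a = u b) : coeff u P = 0 := by
  have hfix : u.mapDomain (swap a b) = u := by
    ext x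
    rw [Finsupp.mapDomain_equiv_apply, symm_swap]
    rcases eq_or_ne x a with rfl | hxa
    · simp [hu]
    rcases eq_or_ne x b with rfl | hxb
    · simp [hu]
    rw [swap_apply_of_ne_of_ne hxa hxb]
  rw [← self_eq_neg, ← coeff_neg, ← hP]
  conv_rhs => rw [← hfix, coeff_rename_mapDomain _ (swap a b).injective]

lemma MvPolynomial.eq_zero_of_isHomogeneous_of_rename_swap_eq_neg [Fintype ι]
    {P : MvPolynomial ι R} {D : ℕ}
    (hP : P.IsHomogeneous D) (hD : D < ∑ i ∈ range (Fintype.card ι), i)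
    (halt : ∀ a b, a ≠ b → rename (swap a b) P = -P) : P = 0 := by
  ext u
  rw [coeff_zero]
  by_contra hu
  have hinj : Function.Injective u := fun a b hab =>
    by_contra fun hne => hu (coeff_eq_zero_of_rename_swap_eq_neg (halt a b hne) hab)
  have hdeg : ∑ i, u i = D := by
    rw [← Finsupp.degree_eq_sum, Finsupp.degree_eq_weight_one]
    exact hP hu
  have hle := sum_range_card_le_sum (univ.image u)
  rw [card_image_of_injective _ hinj, sum_image fun _ _ _ _ h => hinj h, card_univ] at hle
  omega

end Alternating

lemma sum_range_mul_of_even {m k : ℕ} (hk : Even k) :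
    ∑ i ∈ range (m * k), i = m * (k / 2 * (m * k - 1)) := by
  obtain ⟨c, rfl⟩ := hk
  rw [sum_range_id, show (c + c) / 2 = c by omega,
    show m * (c + c) * (m * (c + c) - 1) = 2 * (m * (c * (m * (c + c) - 1))) by ring,
    Nat.mul_div_cancel_left _ two_pos]

theorem stmt11 (m k : ℕ) (hk : Even k) (R : Type*) [Field R] [CharZero R] (d : ℕ)
    (f : MvPolynomial (Fin k) R) (hhom : f.IsHomogeneous d)
    (hd : d < k / 2 * (m * k - 1)) (hskew : IsSkewPoly f) :
    hyperPfPoly m k f = 0 := by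
  have hk₀ : 0 < k := Nat.pos_of_ne_zero fun h => by simp [h] at hd
  have hm₀ : 0 < m := Nat.pos_of_ne_zero fun h => by simp [h] at hd
  have hF : ∑ σ, pfTerm m k f σ = 0 := by
    refine eq_zero_of_isHomogeneous_of_rename_swap_eq_neg
      (IsHomogeneous.sum _ _ _ fun σ _ => pfTerm_isHomogeneous hhom σ) ?_
      fun a b hab => rename_swap_sum_pfTerm f hab
    rw [Fintype.card_fin, sum_range_mul_of_even hk]
    exact Nat.mul_lt_mul_of_pos_left hd hm₀
  have hcard := sum_pfTerm_eq_card_smul_hyperPfPoly (m := m) hk hk₀ hskew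
  rw [hF] at hcard
  exact (nsmul_eq_zero_iff_right Nat.card_pos.ne').mp hcard.symm
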